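/- Soundness of the ∇intro rule: let Q be a cube and σ an atomic substitution not trivializing C. Any model satisfying both ∇ε⃗ C and ∇ε⃗ (¬Q ∨ C|σ) also satisfies ∇ε⃗ ∇(σ ≔ Q) C. Moreover, if Q entails C|σ, the second premise can be dropped. -/
import Mathlib


inductive Atom (V : Type) where
  | tru : Atom V
  | fls : Atom V
  | lit : V → Bool → Atom V
deriving DecidableEq

def Atom.compl {V : Type} : Atom V → Atom V
  | .tru => .fls
  | .fls => .tru
  | .lit v b => .lit v (!b)

/-- A literal: a variable together with a polarity. -/
abbrev Lit (V : Type) := V × Bool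

def Lit.neg {V : Type} (l : Lit V) : Lit V := (l.1, !l.2)

/-- A model is determined by a total assignment to the variables. -/
abbrev Model (V : Type) := V → Bool

def evalAtom {V : Type} (I : Model V) : Atom V → Bool
  | .tru => true
  | .fls => false
  | .lit v b => I v == b

/-- A substitution maps each variable to an atom (extended to atoms/literals below). -/
abbrev Subst (V : Type) := V → Atom V

/-- Atomicity: only finitely many variables are moved. -/
def Subst.IsAtomic {V : Type} (σ : Subst V) : Prop :=
  {v : V | σ v ≠ Atom.lit v true}.Finite

def idSub (V : Type) : Subst V := fun v => Atom.lit v true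

/-- Apply a substitution to a literal, yielding an atom. -/
def subLit {V : Type} (σ : Subst V) (l : Lit V) : Atom V :=
  if l.2 then σ l.1 else (σ l.1).compl

/-- The composed model `I ∘ σ`. -/
def compModel {V : Type} (I : Model V) (σ : Subst V) : Model V :=
  fun v => evalAtom I (σ v)

def satLit {V : Type} (I : Model V) (l : Lit V) : Prop := I l.1 = l.2

/-- A clause: a finite set of literals (disjunctive reading). -/
abbrev Clause (V : Type) := Finset (Lit V)

/-- Non-tautological: no complementary pair of literals. -/
def Clause.Nontaut {V : Type} (C : Clause V) : Prop :=
  ∀ v : V, ¬ ((v, true) ∈ C ∧ (v, false) ∈ C)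

def satClause {V : Type} (I : Model V) (C : Clause V) : Prop :=
  ∃ l ∈ C, satLit I l

/-- `I` falsifies `C`, i.e. satisfies the cube `¬C`. -/
def falsifiesClause {V : Type} (I : Model V) (C : Clause V) : Prop :=
  ∀ l ∈ C, satLit I (Lit.neg l)

/-- A cube is a finite set of literals read conjunctively. -/
def satCube {V : Type} (I : Model V) (Q : Finset (Lit V)) : Prop :=
  ∀ l ∈ Q, satLit I l

/-- `σ` trivializes `C`: some literal is mapped to ⊤, or two literals are mapped
to complementary atoms. -/
def Trivializes {V : Type} (σ : Subst V) (C : Clause V) : Prop :=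
  (∃ l ∈ C, subLit σ l = Atom.tru) ∨
    (∃ l ∈ C, ∃ k ∈ C, subLit σ l = (subLit σ k).compl)

/-- The reduct `C|σ`: images of the literals of `C` that remain literals
(in particular atoms mapped to ⊥ are dropped). -/
def reduct {V : Type} (σ : Subst V) (C : Clause V) : Set (Lit V) :=
  {m | ∃ l ∈ C, subLit σ l = Atom.lit m.1 m.2}

/-- Disjunctive satisfaction of a (possibly infinite) set of literals. -/
def satLitSet {V : Type} (I : Model V) (S : Set (Lit V)) : Prop :=
  ∃ l ∈ S, satLit I l

/-- A CNF formula: a finite set of clauses. -/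
abbrev CNF (V : Type) := Finset (Clause V)

def satCNF {V : Type} (I : Model V) (F : CNF V) : Prop :=
  ∀ C ∈ F, satClause I C

open Classical in
/-- Conditional mutation of a model: apply `σ` if the trigger `T` holds. -/
noncomputable def mutate {V : Type} (I : Model V) (σ : Subst V) (T : Prop) : Model V :=
  if T then compModel I σ else I

/-- A cubic mutation rule `(σ ≔ Q)`. -/
structure MutRule (V : Type) where
  eff : Subst V
  trig : Finset (Lit V)

noncomputable def applyRule {V : Type} (I : Model V) (ε : MutRule V) : Model V :=
  mutate I ε.eff (satCube I ε.trig)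

/-- Apply a sequence of cubic mutation rules `ε₁, …, εₙ` (left to right). -/
noncomputable def applyRules {V : Type} (I : Model V) : List (MutRule V) → Model V
  | [] => I
  | ε :: εs => applyRules (applyRule I ε) εs

/-- SR clause (entailment version of the RUP condition). -/
def IsSR {V : Type} (F : CNF V) (C : Clause V) (σ : Subst V) : Prop :=
  Trivializes σ C ∧
    ∀ D ∈ F, Trivializes σ D ∨
      (∀ I : Model V, falsifiesClause I C → satLitSet I (reduct σ D)) ∨
      (∀ I : Model V, satCNF I F → satClause I C ∨ satLitSet I (reduct σ D))

/-- WSR clause upon `σ` modulo `Δ` (entailment version of the RUP condition). -/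
def IsWSR {V : Type} [DecidableEq V] (F : CNF V) (C : Clause V) (σ : Subst V)
    (Δ : CNF V) : Prop :=
  ∀ D ∈ (F \ Δ) ∪ {C}, Trivializes σ D ∨
    (∀ I : Model V, falsifiesClause I C → satLitSet I (reduct σ D)) ∨
    (∀ I : Model V, satCNF I F → satClause I C ∨ satLitSet I (reduct σ D))

/-- The substitution `Q*` associated with a cube `Q`. -/
def cubeStar {V : Type} [DecidableEq V] (Q : Finset (Lit V)) : Subst V := fun v =>
  if (v, true) ∈ Q then Atom.tru
  else if (v, false) ∈ Q then Atom.fls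
  else Atom.lit v true

/-- Pigeonhole variables: `(i, j)` means "pigeon i is in hole j". -/
def Hcl (i n : ℕ) : Clause (ℕ × ℕ) :=
  (Finset.Ico 1 n).image fun j => ((i, j), true)

def Pcl (i j k : ℕ) : Clause (ℕ × ℕ) :=
  {((i, k), false), ((j, k), false)}

/-- The pigeonhole formula Πₙ. -/
def PHP (n : ℕ) : CNF (ℕ × ℕ) :=
  ((Finset.Icc 1 n).image fun i => Hcl i n) ∪
    ((((Finset.Icc 1 n ×ˢ Finset.Icc 1 n) ×ˢ Finset.Ico 1 n).filter
        fun t => t.1.1 < t.1.2).image fun t => Pcl t.1.1 t.1.2 t.2)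

def Rcl (i n : ℕ) : Clause (ℕ × ℕ) := {((i, n - 1), false)}

/-- The pigeon-swap substitution σᵢₙ, swapping `p i j` with `p n j` for `1 ≤ j < n`. -/
def swapSub (i n : ℕ) : Subst (ℕ × ℕ) := fun p =>
  if p.1 = i ∧ 1 ≤ p.2 ∧ p.2 < n then Atom.lit (n, p.2) true
  else if p.1 = n ∧ 1 ≤ p.2 ∧ p.2 < n then Atom.lit (i, p.2) true
  else Atom.lit p true

/-- soundness of ∇intro.  A model satisfying `∇ε⃗ C` and
`∇ε⃗ (¬Q ∨ C|σ)` also satisfies `∇ε⃗ ∇(σ ≔ Q) C`; moreover, if `Q ⊨ C|σ`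
the second premise can be dropped. -/
theorem nabla_intro_sound {V : Type} (C : Clause V) (σ : Subst V) (Q : Finset (Lit V))
    (hσ : Subst.IsAtomic σ) (h : ¬ Trivializes σ C) (εs : List (MutRule V)) :
    (∀ I : Model V, satClause (applyRules I εs) C →
        ((∃ l ∈ Q, satLit (applyRules I εs) (Lit.neg l)) ∨
          satLitSet (applyRules I εs) (reduct σ C)) →
        satClause (applyRule (applyRules I εs) ⟨σ, Q⟩) C) ∧
      ((∀ J : Model V, satCube J Q → satLitSet J (reduct σ C)) →
        ∀ I : Model V, satClause (applyRules I εs) C →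
          satClause (applyRule (applyRules I εs) ⟨σ, Q⟩) C) := by

  have key : ∀ J : Model V, satLitSet J (reduct σ C) → satClause (compModel J σ) C := by
    rintro J ⟨m, ⟨l, hlC, hsub⟩, hm⟩
    refine ⟨l, hlC, ?_⟩
    have hm' : J m.1 = m.2 := hm
    unfold satLit compModel
    unfold subLit at hsub
    by_cases hb : l.2
    · rw [if_pos hb] at hsub
      rw [hsub]
      simp [evalAtom, hm', hb]
    · rw [if_neg hb] at hsub
      have : σ l.1 = Atom.lit m.1 (!m.2) := by
        cases hσl : σ l.1 with
        | tru => rw [hσl] at hsub; simp [Atom.compl] at hsub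
        | fls => rw [hσl] at hsub; simp [Atom.compl] at hsub
        | lit v b =>
          rw [hσl] at hsub; cases b <;> simp_all [Atom.compl]
      rw [this]
      simp only [evalAtom, hm']
      cases hb2 : l.2
      · simp
      · exact absurd hb2 hb
  constructor
  · intro I hC hdisj
    set J := applyRules I εs with hJ
    unfold applyRule mutate
    by_cases hT : satCube J Q
    · rw [if_pos hT]
      rcases hdisj with ⟨l, hlQ, hneg⟩ | hred
      · exfalso
        have h1 : J l.1 = l.2 := hT l hlQ
        have h2 : J l.1 = !l.2 := hneg
        rw [h1] at h2; simp at h2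
      · exact key J hred
    · rw [if_neg hT]; exact hC
  · intro hQ I hC
    set J := applyRules I εs with hJ
    unfold applyRule mutate
    by_cases hT : satCube J Q
    · rw [if_pos hT]; exact key J (hQ J hT)
    · rw [if_neg hT]; exact hC
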